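/- arXiv:2501.17523 — 3 statements merged into one kernel-verified Lean document; each statement's English description precedes it below -/
import Mathlib

section
/- For every λ > 0 and every irrational α, the set σ^H(c,v) \ [−λ, λ] is nonempty. -/
open MeasureTheory Filter Real

noncomputable section

/-- Distance from a real number to the nearest integer, `‖x‖_𝕋`. -/
def distT (x : ℝ) : ℝ := |x - round x|

/-- `α ∈ DC(γ,σ)`. -/
def DiophantineCond (γ σ α : ℝ) : Prop :=
  ∀ k : ℤ, k ≠ 0 → γ / |(k : ℝ)| ^ σ ≤ distT (k * α)

/-- `α ∈ DC = ⋃_{γ,σ>0} DC(γ,σ)`. -/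
def Diophantine (α : ℝ) : Prop :=
  ∃ γ σ : ℝ, 0 < γ ∧ 0 < σ ∧ DiophantineCond γ σ α

/-- The mosaic-type potential `v(θ,n)`. -/
def mosV (α lam θ : ℝ) (n : ℤ) : ℝ :=
  if Odd n then Real.cos (2 * π * (((n : ℝ) - 1) * α + θ))
  else Real.cos (2 * π * ((n : ℝ) * α + θ))

/-- The mosaic-type hopping `c(θ,n)`. -/
def mosC (α lam θ : ℝ) (n : ℤ) : ℝ :=
  if Odd n then lam else Real.cos (2 * π * ((n : ℝ) * α + θ))

/-- `θ ∈ 𝕋₀`. -/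
def memT0 (α θ : ℝ) : Prop := ∀ n : ℤ, Real.cos (2 * π * ((n : ℝ) * α + θ)) ≠ 0

/-- The Hilbert space `ℓ²(ℤ,ℂ)`. -/
abbrev ZSeq := lp (fun _ : ℤ => ℂ) 2

/-- `H` acts as the mosaic-type Jacobi operator `H_{c,v,θ}` on `ℓ²(ℤ)`. -/
def IsMosaicOp (α lam θ : ℝ) (H : ZSeq →L[ℂ] ZSeq) : Prop :=
  ∀ u : ZSeq, ∀ n : ℤ,
    (H u : ∀ _ : ℤ, ℂ) n =
      (mosC α lam θ n : ℂ) * (u : ∀ _ : ℤ, ℂ) (n + 1)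
      + (mosC α lam θ (n - 1) : ℂ) * (u : ∀ _ : ℤ, ℂ) (n - 1)
      + (mosV α lam θ n : ℂ) * (u : ∀ _ : ℤ, ℂ) n

/-- The spectrum of `H`, viewed as a subset of `ℝ`. -/
def realSpectrum (H : ZSeq →L[ℂ] ZSeq) : Set ℝ := {E : ℝ | (E : ℂ) ∈ spectrum ℂ H}

/-- `μ` is the spectral measure of the bounded self-adjoint operator `H` at the vector `φ`:
it is compactly supported and has the correct moments. -/
def IsSpectralMeasure (H : ZSeq →L[ℂ] ZSeq) (φ : ZSeq) (μ : Measure ℝ) : Prop :=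
  (∃ R : ℝ, μ {x : ℝ | R < |x|} = 0) ∧
  ∀ k : ℕ, (∫ x : ℝ, (x : ℂ) ^ k ∂μ) = @inner ℂ _ _ φ ((H ^ k) φ)

/-- The restriction of `μ` to `B` is singular continuous: it is mutually singular with
Lebesgue measure and has no atoms. -/
def SingContOn (μ : Measure ℝ) (B : Set ℝ) : Prop :=
  (μ.restrict B).MutuallySingular volume ∧ ∀ x : ℝ, μ.restrict B {x} = 0

/-- The restriction of `μ` to `B` is absolutely continuous w.r.t. Lebesgue measure. -/
def AbsContOn (μ : Measure ℝ) (B : Set ℝ) : Prop := μ.restrict B ≪ volume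

/-- The restriction of `μ` to `B` is pure point (supported on a countable set). -/
def PurePointOn (μ : Measure ℝ) (B : Set ℝ) : Prop :=
  ∃ D : Set ℝ, D.Countable ∧ μ.restrict B Dᶜ = 0

/-- `u : ℤ → ℂ` is a formal solution of `H_{c,v,θ} u = E u`. -/
def MosaicEigenEq (α lam θ E : ℝ) (u : ℤ → ℂ) : Prop :=
  ∀ n : ℤ,
    (mosC α lam θ n : ℂ) * u (n + 1) + (mosC α lam θ (n - 1) : ℂ) * u (n - 1)
      + (mosV α lam θ n : ℂ) * u n = (E : ℂ) * u n

/-- Anderson localization of the mosaic operator in the set `S`: pure point spectrum in `S`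
together with exponential decay of the eigenfunctions with eigenvalue in `S`. -/
def AndersonLocalizationIn (α lam θ : ℝ) (H : ZSeq →L[ℂ] ZSeq) (S : Set ℝ) : Prop :=
  (∀ φ : ZSeq, ∀ μ : Measure ℝ, IsSpectralMeasure H φ μ → PurePointOn μ S) ∧
  (∀ E ∈ S, ∀ u : ℤ → ℂ, Memℓp u 2 → u ≠ 0 → MosaicEigenEq α lam θ E u →
    ∃ C γ : ℝ, 0 < γ ∧ ∀ n : ℤ, ‖u n‖ ≤ C * Real.exp (-γ * |(n : ℝ)|))


/-! The mosaic operator is a Jacobi operator with real coefficients, hence self-adjoint, so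
`‖H‖` or `-‖H‖` lies in its spectrum. Testing `H` on `δₙ` with `n` even gives
`‖H‖² ≥ c(n-1)² + c(n)² = λ² + cos²(2π(nα+θ))`, and for irrational `α` the cosine cannot vanish
at both `n = 0` and `n = 2`; hence `‖H‖ > λ`. -/

open ComplexConjugate

namespace lp

variable {ι : Type*} [DecidableEq ι]

theorem isSelfAdjoint_of_apply_single (T : ℓ²(ι, ℂ) →L[ℂ] ℓ²(ι, ℂ))
    (hT : ∀ i j, T (lp.single 2 i 1) j = conj (T (lp.single 2 j 1) i)) : IsSelfAdjoint T := by
  rw [ContinuousLinearMap.isSelfAdjoint_iff']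
  refine lp.ext_continuousLinearMap ENNReal.ofNat_ne_top fun i => ?_
  refine ContinuousLinearMap.ext_ring (lp.ext (funext fun j => ?_))
  have h := lp.inner_single_left (𝕜 := ℂ) j 1 (ContinuousLinearMap.adjoint T (lp.single 2 i 1))
  rw [ContinuousLinearMap.adjoint_inner_right, lp.inner_single_right] at h
  simpa [hT i j] using h.symm

theorem norm_sq_add_norm_sq_le {E : ι → Type*} [∀ i, NormedAddCommGroup (E i)] (f : lp E 2)
    {i j : ι} (hij : i ≠ j) :
    ‖f i‖ ^ 2 + ‖f j‖ ^ 2 ≤ ‖f‖ ^ 2 := by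
  have h := lp.sum_rpow_le_norm_rpow (p := 2) (by norm_num) f {i, j}
  simpa [Finset.sum_pair hij] using h

instance [Nonempty ι] : Nontrivial ℓ²(ι, ℂ) :=
  let i := Classical.arbitrary ι
  nontrivial_of_ne (lp.single 2 i 1) 0 fun h => by simpa using congr($h i)

end lp

def IsJacobiOp (a b : ℤ → ℝ) (H : ZSeq →L[ℂ] ZSeq) : Prop :=
  ∀ u : ZSeq, ∀ n : ℤ,
    (H u : ∀ _ : ℤ, ℂ) n =
      (a n : ℂ) * (u : ∀ _ : ℤ, ℂ) (n + 1) + (a (n - 1) : ℂ) * (u : ∀ _ : ℤ, ℂ) (n - 1)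
      + (b n : ℂ) * (u : ∀ _ : ℤ, ℂ) n

namespace IsJacobiOp

variable {a b : ℤ → ℝ} {H : ZSeq →L[ℂ] ZSeq}

theorem apply_single (hH : IsJacobiOp a b H) (m n : ℤ) :
    H (lp.single 2 m 1) n =
      if n + 1 = m then (a n : ℂ) else if n - 1 = m then (a m : ℂ) else if n = m then (b n : ℂ)
      else 0 := by
  rw [hH]
  simp only [lp.single_apply, Pi.single_apply]
  split_ifs <;> first | omega | (subst_vars; simp)

theorem isSelfAdjoint (hH : IsJacobiOp a b H) : IsSelfAdjoint H :=
  lp.isSelfAdjoint_of_apply_single H fun i j => by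
    simp only [hH.apply_single]
    split_ifs <;> first | omega | (subst_vars; simp)

theorem sq_add_sq_le_norm_sq (hH : IsJacobiOp a b H) (n : ℤ) :
    a (n - 1) ^ 2 + a n ^ 2 ≤ ‖H‖ ^ 2 := by
  have hle := lp.norm_sq_add_norm_sq_le (H (lp.single 2 n 1)) (i := n - 1) (j := n + 1) (by omega)
  simp only [hH.apply_single] at hle
  calc a (n - 1) ^ 2 + a n ^ 2 ≤ ‖H (lp.single 2 n 1)‖ ^ 2 := by
        simpa [show n + 1 + 1 ≠ n by omega] using hle
    _ ≤ ‖H‖ ^ 2 := by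
        gcongr
        simpa using H.le_opNorm (lp.single 2 n 1)

end IsJacobiOp

theorem exists_mem_realSpectrum_abs_eq_norm {T : ZSeq →L[ℂ] ZSeq} (hT : IsSelfAdjoint T) :
    ∃ E ∈ realSpectrum T, |E| = ‖T‖ := by
  have hmem {E : ℝ} (hE : E ∈ spectrum ℝ T) : E ∈ realSpectrum T :=
    (spectrum.algebraMap_mem_iff ℂ (r := E)).2 hE
  rcases CStarAlgebra.norm_or_neg_norm_mem_spectrum hT with h | h
  · exact ⟨‖T‖, hmem h, abs_norm T⟩
  · exact ⟨-‖T‖, hmem h, by simp⟩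

theorem Irrational.exists_even_cos_ne_zero {α : ℝ} (hα : Irrational α) (θ : ℝ) :
    ∃ n : ℤ, Even n ∧ Real.cos (2 * π * ((n : ℝ) * α + θ)) ≠ 0 := by
  by_contra! h
  -- both zeros would force `sin (4πα) = 0`
  have h0 := h 0 .zero
  have h2 := h 2 even_two
  push_cast at h0 h2
  obtain ⟨k, hk⟩ : ∃ k : ℤ, k * π = 2 * π * (2 * α + θ) - 2 * π * (0 * α + θ) :=
    Real.sin_eq_zero_iff.1 (by rw [Real.sin_sub, h0, h2]; ring)
  refine hα ⟨k / 4, ?_⟩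
  push_cast
  nlinarith [Real.pi_pos]

namespace IsMosaicOp

variable {α lam θ : ℝ} {H : ZSeq →L[ℂ] ZSeq}

theorem isJacobiOp (hH : IsMosaicOp α lam θ H) : IsJacobiOp (mosC α lam θ) (mosV α lam θ) H := hH

theorem lt_norm (hH : IsMosaicOp α lam θ H) (hα : Irrational α) : lam < ‖H‖ := by
  obtain ⟨n, hn, hcos⟩ := hα.exists_even_cos_ne_zero θ
  have hbound := hH.isJacobiOp.sq_add_sq_le_norm_sq n
  have hodd : Odd (n - 1) := hn.sub_odd odd_one
  simp only [mosC, if_pos hodd, if_neg (Int.not_odd_iff_even.2 hn)] at hbound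
  have : lam ^ 2 < ‖H‖ ^ 2 := by nlinarith [sq_pos_of_ne_zero hcos]
  exact lt_of_pow_lt_pow_left₀ 2 (norm_nonneg H) this

end IsMosaicOp

theorem mosaic_supercritical_nonempty_general (α lam θ : ℝ) (hα : Irrational α)
    (H : ZSeq →L[ℂ] ZSeq) (hH : IsMosaicOp α lam θ H) :
    (realSpectrum H \ Set.Icc (-lam) lam).Nonempty := by
  obtain ⟨E, hE, hE_abs⟩ := exists_mem_realSpectrum_abs_eq_norm hH.isJacobiOp.isSelfAdjoint
  refine ⟨E, hE, fun hE_mem => ?_⟩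
  linarith [abs_le.2 hE_mem, hH.lt_norm hα]

/-- For every `λ > 0` and every irrational `α`, the set
`σ^H(c,v) \ [−λ, λ]` is nonempty. -/
theorem mosaic_supercritical_nonempty (α lam θ : ℝ) (hα : Irrational α) (hlam : 0 < lam)
    (H : ZSeq →L[ℂ] ZSeq) (hH : IsMosaicOp α lam θ H) :
    (realSpectrum H \ Set.Icc (-lam) lam).Nonempty :=
  mosaic_supercritical_nonempty_general α lam θ hα H hH
end
end

section
/- For every λ > 0, every irrational α, and every θ ∈ 𝕋₀, neither λ nor −λ is an eigenvalue of the mosaic-type operator H_{c,v,θ} (i.e., the equation H_{c,v,θ}u = ±λ u has no nonzero solution u ∈ ℓ²(ℤ)). -/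
open MeasureTheory Filter Real

noncomputable section

/-!
Write `E = λ s` with `s = ±1`. Subtracting the eigenvalue equations at the sites `2k` and `2k + 1`
eliminates the quasi-periodic coefficient `cos 2π(2kα + θ)` they share and leaves
`G (k + 1) = -s G k` for `G k = u (2k) - s u (2k - 1)`. So `‖G k‖` is constant, and it vanishes
because `u ∈ ℓ²`. With `G = 0` the equation at `2k` reads `cos 2π(2kα + θ) (u (2k + 1) + u (2k)) = 0`,
so `θ ∈ 𝕋₀` forces `u (2k + 1) = -u (2k)`; then `u (2k + 2) = -s u (2k)`, and the same argument
kills `u` on the even, hence on all, sites.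
-/

open Topology

theorem Memℓp.tendsto_cofinite_zero {ι E : Type*} [NormedAddCommGroup E] {p : ENNReal}
    {f : ι → E} (hp : 0 < p.toReal) (hf : Memℓp f p) : Tendsto f cofinite (𝓝 0) := by
  rw [tendsto_zero_iff_norm_tendsto_zero]
  have hroot : Tendsto (fun x : ℝ => x ^ p.toReal⁻¹) (𝓝 0) (𝓝 0) := by
    simpa [Real.zero_rpow (inv_ne_zero hp.ne')] using
      (Real.continuousAt_rpow_const 0 p.toReal⁻¹ (Or.inr (inv_nonneg.2 hp.le))).tendsto
  simpa only [Function.comp_def, Real.rpow_rpow_inv (norm_nonneg _) hp.ne'] using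
    hroot.comp (hf.summable hp).tendsto_cofinite_zero

theorem Int.eq_zero_of_norm_add_one_eq_of_tendsto_cofinite {E : Type*} [NormedAddCommGroup E]
    {F : ℤ → E} (hF : ∀ k, ‖F (k + 1)‖ = ‖F k‖) (h0 : Tendsto F cofinite (𝓝 0)) : F = 0 := by
  have hconst : ∀ k, ‖F k‖ = ‖F 0‖ := by
    intro k
    induction k using Int.induction_on with
    | zero => rfl
    | succ n ih => rw [hF, ih]
    | pred n ih => rw [← ih, ← hF, sub_add_cancel]
  have hlim : Tendsto (fun k => ‖F k‖) cofinite (𝓝 ‖F 0‖) := by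
    simp only [hconst, tendsto_const_nhds]
  have hF0 : ‖F 0‖ = 0 := tendsto_nhds_unique hlim (tendsto_zero_iff_norm_tendsto_zero.1 h0)
  funext k
  exact norm_eq_zero.1 ((hconst k).trans hF0)

namespace MosaicEigenEq

variable {α lam θ E : ℝ} {u : ℤ → ℂ}

theorem eq_at_two_mul (heig : MosaicEigenEq α lam θ E u) (k : ℤ) :
    (Real.cos (2 * π * (((2 * k : ℤ) : ℝ) * α + θ)) : ℂ) * (u (2 * k + 1) + u (2 * k))
      + lam * u (2 * k - 1) = E * u (2 * k) := by
  have h := heig (2 * k)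
  have heven : ¬ Odd (2 * k) := by simp [Int.not_odd_iff_even]
  have hodd : Odd (2 * k - 1) := ⟨k - 1, by ring⟩
  simp only [mosC, mosV, if_neg heven, if_pos hodd] at h
  linear_combination h

theorem eq_at_two_mul_add_one (heig : MosaicEigenEq α lam θ E u) (k : ℤ) :
    (Real.cos (2 * π * (((2 * k : ℤ) : ℝ) * α + θ)) : ℂ) * (u (2 * k + 1) + u (2 * k))
      + lam * u (2 * k + 2) = E * u (2 * k + 1) := by
  have h := heig (2 * k + 1)
  have heven : ¬ Odd (2 * k) := by simp [Int.not_odd_iff_even]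
  have hodd : Odd (2 * k + 1) := ⟨k, by ring⟩
  have hprev : (((2 * k + 1 : ℤ) : ℝ) - 1) = ((2 * k : ℤ) : ℝ) := by push_cast; ring
  rw [show 2 * k + 1 - 1 = 2 * k by ring, show 2 * k + 1 + 1 = 2 * k + 2 by ring] at h
  simp only [mosC, mosV, if_pos hodd, if_neg heven, hprev] at h
  linear_combination h

variable {s : ℂ} (hs : s * s = 1) (hE : (E : ℂ) = lam * s)
include hs hE

theorem two_mul_sub_mul_pred_succ (heig : MosaicEigenEq α lam θ E u) (hlam : lam ≠ 0)
    (k : ℤ) :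
    u (2 * (k + 1)) - s * u (2 * (k + 1) - 1) = -s * (u (2 * k) - s * u (2 * k - 1)) := by
  have hstep : u (2 * k + 2) = s * u (2 * k + 1) - s * u (2 * k) + u (2 * k - 1) := by
    apply mul_left_cancel₀ (Complex.ofReal_ne_zero.2 hlam)
    linear_combination heig.eq_at_two_mul_add_one k - heig.eq_at_two_mul k
      + (u (2 * k + 1) - u (2 * k)) * hE
  rw [show 2 * (k + 1) - 1 = 2 * k + 1 by ring, show 2 * (k + 1) = 2 * k + 2 by ring, hstep]
  linear_combination (-u (2 * k - 1)) * hs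

theorem two_mul_add_one_eq_neg (heig : MosaicEigenEq α lam θ E u) (hθ : memT0 α θ) {k : ℤ}
    (hG : u (2 * k) = s * u (2 * k - 1)) : u (2 * k + 1) = -u (2 * k) := by
  have hcos : (Real.cos (2 * π * (((2 * k : ℤ) : ℝ) * α + θ)) : ℂ)
      * (u (2 * k + 1) + u (2 * k)) = 0 := by
    linear_combination heig.eq_at_two_mul k + u (2 * k) * hE + lam * s * hG
      + lam * u (2 * k - 1) * hs
  linear_combination (mul_eq_zero.1 hcos).resolve_left (Complex.ofReal_ne_zero.2 (hθ (2 * k)))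

variable (hu : Tendsto u cofinite (𝓝 0))
include hu

theorem two_mul_eq_mul_pred (heig : MosaicEigenEq α lam θ E u) (hlam : lam ≠ 0) (k : ℤ) :
    u (2 * k) = s * u (2 * k - 1) := by
  have hs1 : ‖s‖ = 1 := by rcases mul_self_eq_one_iff.1 hs with rfl | rfl <;> simp
  have hG : (fun k => u (2 * k) - s * u (2 * k - 1)) = 0 := by
    refine Int.eq_zero_of_norm_add_one_eq_of_tendsto_cofinite (fun k => ?_) ?_
    · rw [heig.two_mul_sub_mul_pred_succ hs hE hlam, norm_mul, norm_neg, hs1, one_mul]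
    · have hu_even : Tendsto (fun k : ℤ => u (2 * k)) cofinite (𝓝 0) :=
        hu.comp (Function.Injective.tendsto_cofinite fun _ _ h => by simpa using h)
      have hu_odd : Tendsto (fun k : ℤ => u (2 * k - 1)) cofinite (𝓝 0) :=
        hu.comp (Function.Injective.tendsto_cofinite fun _ _ h => by omega)
      simpa using hu_even.sub (hu_odd.const_mul s)
  exact sub_eq_zero.1 (congrFun hG k)

theorem two_mul_eq_zero (heig : MosaicEigenEq α lam θ E u) (hθ : memT0 α θ) (hlam : lam ≠ 0)
    (k : ℤ) : u (2 * k) = 0 := by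
  have hs1 : ‖s‖ = 1 := by rcases mul_self_eq_one_iff.1 hs with rfl | rfl <;> simp
  have hodd (k : ℤ) : u (2 * k + 1) = -u (2 * k) :=
    heig.two_mul_add_one_eq_neg hs hE hθ (heig.two_mul_eq_mul_pred hs hE hu hlam k)
  suffices h : (fun k => u (2 * k)) = 0 from congrFun h k
  refine Int.eq_zero_of_norm_add_one_eq_of_tendsto_cofinite (fun k => ?_)
    (hu.comp (Function.Injective.tendsto_cofinite fun _ _ h => by simpa using h))
  have hstep : u (2 * (k + 1)) = -s * u (2 * k) := by
    rw [heig.two_mul_eq_mul_pred hs hE hu hlam, show 2 * (k + 1) - 1 = 2 * k + 1 by ring, hodd]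
    ring
  rw [hstep, norm_mul, norm_neg, hs1, one_mul]

end MosaicEigenEq

theorem mosaic_pm_lambda_not_eigenvalue_general (α lam θ : ℝ) (hlam : 0 < lam)
    (hθ : memT0 α θ) (E : ℝ) (hE : E = lam ∨ E = -lam) :
    ∀ u : ℤ → ℂ, Memℓp u 2 → MosaicEigenEq α lam θ E u → u = 0 := by
  intro u hu heig
  obtain ⟨s, hs, hEs⟩ : ∃ s : ℂ, s * s = 1 ∧ (E : ℂ) = lam * s := by
    rcases hE with rfl | rfl
    · exact ⟨1, by simp⟩
    · exact ⟨-1, by simp⟩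
  have hu0 := hu.tendsto_cofinite_zero (by norm_num)
  have heven (k : ℤ) : u (2 * k) = 0 := heig.two_mul_eq_zero hs hEs hu0 hθ hlam.ne' k
  funext n
  obtain ⟨k, rfl | rfl⟩ := n.even_or_odd'
  · exact heven k
  · rw [heig.two_mul_add_one_eq_neg hs hEs hθ (heig.two_mul_eq_mul_pred hs hEs hu0 hlam.ne' k),
      heven, neg_zero, Pi.zero_apply]

/-- For every `λ > 0`, every irrational `α`, and every `θ ∈ 𝕋₀`, neither
`λ` nor `−λ` is an eigenvalue of the mosaic-type operator `H_{c,v,θ}`: the equation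
`H_{c,v,θ} u = ±λ u` has no nonzero solution `u ∈ ℓ²(ℤ)`. -/
theorem mosaic_pm_lambda_not_eigenvalue (α lam θ : ℝ) (hα : Irrational α) (hlam : 0 < lam)
    (hθ : memT0 α θ) (E : ℝ) (hE : E = lam ∨ E = -lam) :
    ∀ u : ℤ → ℂ, Memℓp u 2 → MosaicEigenEq α lam θ E u → u = 0 :=
  mosaic_pm_lambda_not_eigenvalue_general α lam θ hlam hθ E hE
end
end

section
/- Let α ∈ ℝ∖ℚ and ṽ ∈ C⁰(𝕋, ℂ). Assume there are constants l ≥ 1 and ε with 0 < ε ≤ l such that |Re ṽ(x)| ≤ l and ε ≤ Im ṽ(x) ≤ l for every x ∈ 𝕋. Then the Lyapunov exponent of the Schrödinger-type cocycle satisfies L(α, S^ṽ) ≥ C(l)·ε, where C(l) > 0 is a constant depending only on l. -/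
/-!
From `z₀ = iε`, iterate the Möbius map `z ↦ ṽ(x + kα) − 1/z` induced by `S^ṽ`: then
`A_n(x) (z₀, 1) = (∏_{k<n} z_k) (z_n, 1)` and `Im z_k ≥ ε`. With `b_k = Im z_k` and
`s_k = Im ṽ(x + kα)` one has `b_{k+1} = s_k + b_k / |z_k|²`, so `ln t ≤ t − 1` gives
`2 ln |z_k| ≥ ln b_k − ln b_{k+1} + s_k / b_{k+1}`. The first two terms telescope, and of two
consecutive heights `b_{k+1}, b_{k+2}` one is at most `2l`, so the last terms contribute at least
`ε/(4l)` per step on average. Hence `ln ‖A_n(x)‖ ≥ nε/(8l) − O(1)` uniformly in `x`.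

The integrals `∫ ln ‖A_n‖` are subadditive up to `ln 2` (the entrywise sup norm is
submultiplicative up to the factor `2`), so Fekete's lemma gives the Lyapunov exponent, and the
uniform lower bound passes to the limit.
-/

open MeasureTheory Filter Real
open scoped Matrix

noncomputable section

attribute [local instance] Matrix.normedAddCommGroup

/-- The Schrödinger-type cocycle matrix `S^ṽ(x) = [[ṽ(x), −1],[1, 0]]`. -/
def Scoc (v : ℝ → ℂ) (x : ℝ) : Matrix (Fin 2) (Fin 2) ℂ := !![v x, -1; 1, 0]

/-- The `n`-step product `A_n(x) = S^ṽ(x+(n−1)α) ⋯ S^ṽ(x)` of the quasiperiodic cocycle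
`(α, S^ṽ)`. -/
def ScocProd (v : ℝ → ℂ) (α x : ℝ) : ℕ → Matrix (Fin 2) (Fin 2) ℂ
  | 0 => 1
  | n + 1 => Scoc v (x + (n : ℝ) * α) * ScocProd v α x n

/-- `L` is the Lyapunov exponent `L(α, S^ṽ) = lim (1/n)∫_𝕋 ln‖A_n(x)‖ dx`. -/
def IsLyapunovSchrodinger (v : ℝ → ℂ) (α L : ℝ) : Prop :=
  Tendsto (fun n : ℕ =>
      (1 / (n : ℝ)) * ∫ x in Set.Ioc (0 : ℝ) 1, Real.log ‖ScocProd v α x n‖)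
    atTop (nhds L)

open Topology

namespace Matrix

variable {R : Type*} [NormedRing R] {m n p : Type*} [Fintype m] [Fintype n] [Fintype p]

theorem norm_mul_le_card_mul (A : Matrix m n R) (B : Matrix n p R) :
    ‖A * B‖ ≤ Fintype.card n * (‖A‖ * ‖B‖) := by
  refine (norm_le_iff (by positivity)).2 fun i j => ?_
  calc ‖(A * B) i j‖ = ‖∑ k, A i k * B k j‖ := rfl
    _ ≤ ∑ k, ‖A i k‖ * ‖B k j‖ := norm_sum_le_of_le _ fun k _ => norm_mul_le _ _
    _ ≤ ∑ _k : n, ‖A‖ * ‖B‖ := by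
        gcongr <;> exact norm_entry_le_entrywise_sup_norm _
    _ = Fintype.card n * (‖A‖ * ‖B‖) := by simp

theorem norm_mulVec_apply_le (A : Matrix m n R) (x : n → R) (i : m) :
    ‖(A *ᵥ x) i‖ ≤ ‖A‖ * ∑ j, ‖x j‖ := by
  rw [Finset.mul_sum]
  refine norm_sum_le_of_le _ fun j _ => (norm_mul_le _ _).trans ?_
  gcongr
  exact norm_entry_le_entrywise_sup_norm _

end Matrix

theorem Function.Periodic.setIntegral_Ioc_comp_add_right {E : Type*} [NormedAddCommGroup E]
    [NormedSpace ℝ E] {f : ℝ → E} {T : ℝ} (hf : Function.Periodic f T) (hT : 0 ≤ T) (c : ℝ) :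
    ∫ x in Set.Ioc 0 T, f (x + c) = ∫ x in Set.Ioc 0 T, f x := by
  rw [← intervalIntegral.integral_of_le hT, ← intervalIntegral.integral_of_le hT,
    intervalIntegral.integral_comp_add_right, zero_add, add_comm T,
    hf.intervalIntegral_add_eq c 0, zero_add]

theorem setIntegral_Ioc_add_le_of_le_comp_add {f : ℕ → ℝ → ℝ} {τ c : ℝ}
    (hf : ∀ n, Continuous (f n)) (hper : ∀ n, Function.Periodic (f n) 1)
    (hsub : ∀ m n x, f (m + n) x ≤ f n (x + m * τ) + f m x + c) (m n : ℕ) :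
    ∫ x in Set.Ioc 0 1, f (m + n) x ≤
      (∫ x in Set.Ioc 0 1, f m x) + (∫ x in Set.Ioc 0 1, f n x) + c := by
  have hshift : IntegrableOn (fun x => f n (x + m * τ)) (Set.Ioc 0 1) :=
    ((hf n).comp (continuous_add_const _)).integrableOn_Ioc
  have hsum : IntegrableOn (fun x => f n (x + m * τ) + f m x) (Set.Ioc 0 1) :=
    hshift.add (hf m).integrableOn_Ioc
  have hconst : IntegrableOn (fun _ => c) (Set.Ioc (0 : ℝ) 1) :=
    integrableOn_const measure_Ioc_lt_top.ne
  calc ∫ x in Set.Ioc 0 1, f (m + n) x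
      ≤ ∫ x in Set.Ioc 0 1, (f n (x + m * τ) + f m x + c) :=
        setIntegral_mono (hf _).integrableOn_Ioc (hsum.add hconst) (hsub m n)
    _ = (∫ x in Set.Ioc 0 1, f n (x + m * τ)) + (∫ x in Set.Ioc 0 1, f m x) + c := by
        rw [integral_add hsum hconst, integral_add hshift (hf m).integrableOn_Ioc]
        simp
    _ = _ := by
        rw [(hper n).setIntegral_Ioc_comp_add_right zero_le_one]
        ring

theorem exists_tendsto_div_ge_of_add_le_add_add {u : ℕ → ℝ} {a b c : ℝ}
    (hsub : ∀ m n, u (m + n) ≤ u m + u n + c) (hlow : ∀ n : ℕ, n * a - b ≤ u n) :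
    ∃ L, Tendsto (fun n : ℕ => u n / n) atTop (𝓝 L) ∧ a ≤ L := by
  have hsa : Subadditive fun n => u n + c := fun m n => by linarith [hsub m n]
  have hbdd : BddBelow (Set.range fun n : ℕ => (u n + c) / n) := by
    refine ⟨-|a| - |c - b|, ?_⟩
    rintro _ ⟨n, rfl⟩
    rcases Nat.eq_zero_or_pos n with rfl | hn
    · simp only [Nat.cast_zero, div_zero]
      linarith [abs_nonneg a, abs_nonneg (c - b)]
    · have hn1 : (1 : ℝ) ≤ n := by exact_mod_cast hn
      rw [le_div_iff₀ (by positivity)]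
      nlinarith [hlow n, neg_abs_le a, neg_abs_le (c - b), abs_nonneg a, abs_nonneg (c - b)]
  have hu : Tendsto (fun n : ℕ => u n / n) atTop (𝓝 hsa.lim) := by
    have := (hsa.tendsto_lim hbdd).sub (tendsto_const_div_atTop_nhds_zero_nat c)
    rw [sub_zero] at this
    refine this.congr fun n => ?_
    ring
  refine ⟨hsa.lim, hu, le_of_tendsto_of_tendsto (f := fun n : ℕ => a - b / n) ?_ hu ?_⟩
  · simpa using tendsto_const_nhds.sub (tendsto_const_div_atTop_nhds_zero_nat b)
  · filter_upwards [eventually_gt_atTop 0] with n hn0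
    have hn : (0 : ℝ) < n := by exact_mod_cast hn0
    have hrw : a - b / n = (n * a - b) / n := by field_simp
    rw [hrw]
    exact div_le_div_of_nonneg_right (hlow n) hn.le

theorem sub_one_mul_le_two_mul_sum_range {t : ℕ → ℝ} {c : ℝ} (hc : 0 ≤ c) (ht : ∀ k, 0 ≤ t k)
    (hpair : ∀ k, c ≤ t k + t (k + 1)) (n : ℕ) :
    ((n : ℝ) - 1) * c ≤ 2 * ∑ k ∈ Finset.range n, t k := by
  cases n with
  | zero => simpa using hc
  | succ n =>
    have hpairs : n * c ≤ ∑ k ∈ Finset.range n, (t k + t (k + 1)) := by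
      simpa using Finset.card_nsmul_le_sum (Finset.range n) _ c fun k _ => hpair k
    rw [Finset.sum_add_distrib] at hpairs
    have h1 := Finset.sum_range_succ t n
    have h2 := Finset.sum_range_succ' t n
    push_cast
    linarith [ht n, ht 0]

theorem Complex.im_div_normSq_le_inv_im {z : ℂ} (hz : 0 < z.im) :
    z.im / Complex.normSq z ≤ z.im⁻¹ := by
  have hN : z.im ^ 2 ≤ Complex.normSq z := by
    rw [Complex.normSq_apply]
    nlinarith [sq_nonneg z.re]
  rw [div_le_iff₀ (Complex.normSq_pos.2 fun h => by simp [h] at hz), inv_mul_eq_div,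
    le_div_iff₀ hz]
  nlinarith

/-- The orbit of the line `ℂ • ![z₀, 1]` under the matrices `!![w k, -1; 1, 0]`, in the affine
coordinate `z` of `ℂ • ![z, 1]`. -/
def riccatiOrbit (w : ℕ → ℂ) (z₀ : ℂ) : ℕ → ℂ
  | 0 => z₀
  | k + 1 => w k - (riccatiOrbit w z₀ k)⁻¹

section riccatiOrbit

variable (w : ℕ → ℂ) (z₀ : ℂ)

theorem riccatiOrbit_succ_im (k : ℕ) :
    (riccatiOrbit w z₀ (k + 1)).im =
      (w k).im + (riccatiOrbit w z₀ k).im / Complex.normSq (riccatiOrbit w z₀ k) := by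
  simp only [riccatiOrbit, Complex.sub_im, Complex.inv_im]
  ring

variable {w z₀}

theorem le_riccatiOrbit_im {ε : ℝ} (hε : 0 ≤ ε) (hw : ∀ k, ε ≤ (w k).im) (h₀ : ε ≤ z₀.im)
    (k : ℕ) : ε ≤ (riccatiOrbit w z₀ k).im := by
  induction k with
  | zero => exact h₀
  | succ k ih =>
    rw [riccatiOrbit_succ_im]
    linarith [hw k, div_nonneg (hε.trans ih) (Complex.normSq_nonneg (riccatiOrbit w z₀ k))]

theorem riccatiOrbit_succ_im_le {k : ℕ} (hk : 0 < (riccatiOrbit w z₀ k).im) :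
    (riccatiOrbit w z₀ (k + 1)).im ≤ (w k).im + (riccatiOrbit w z₀ k).im⁻¹ := by
  rw [riccatiOrbit_succ_im]
  linarith [Complex.im_div_normSq_le_inv_im hk]

theorem log_im_sub_log_im_add_div_le_two_mul_log_norm {k : ℕ}
    (hk : 0 < (riccatiOrbit w z₀ k).im) (hwk : 0 < (w k).im) :
    log (riccatiOrbit w z₀ k).im - log (riccatiOrbit w z₀ (k + 1)).im
        + (w k).im / (riccatiOrbit w z₀ (k + 1)).im ≤ 2 * log ‖riccatiOrbit w z₀ k‖ := by
  set b := (riccatiOrbit w z₀ k).im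
  set b' := (riccatiOrbit w z₀ (k + 1)).im
  set s := (w k).im
  set N := Complex.normSq (riccatiOrbit w z₀ k)
  have hN : 0 < N := Complex.normSq_pos.2 fun h => by simp [b, h] at hk
  have hb' : b' = s + b / N := riccatiOrbit_succ_im w z₀ k
  have hb'pos : 0 < b' := by rw [hb']; positivity
  have hratio : b / (N * b') = 1 - s / b' := by
    rw [hb']
    field_simp
    ring
  have hlog := log_le_sub_one_of_pos (show 0 < b / (N * b') by positivity)
  rw [log_div hk.ne' (by positivity), log_mul hN.ne' hb'pos.ne', hratio] at hlog
  have hNnorm : log N = 2 * log ‖riccatiOrbit w z₀ k‖ := by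
    rw [show N = ‖riccatiOrbit w z₀ k‖ ^ 2 from Complex.normSq_eq_norm_sq _, log_pow,
      Nat.cast_ofNat]
  linarith

theorem le_im_div_riccatiOrbit_im_add_next {ε l : ℝ} (hl : 1 ≤ l) (hε : 0 < ε)
    (hw : ∀ k, ε ≤ (w k).im ∧ (w k).im ≤ l) (h₀ : ε ≤ z₀.im) (k : ℕ) :
    ε / (2 * l) ≤ (w k).im / (riccatiOrbit w z₀ (k + 1)).im
      + (w (k + 1)).im / (riccatiOrbit w z₀ (k + 2)).im := by
  have hb (j : ℕ) : 0 < (riccatiOrbit w z₀ j).im :=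
    hε.trans_le (le_riccatiOrbit_im hε.le (fun k => (hw k).1) h₀ j)
  have hgain (j : ℕ) (hj : (riccatiOrbit w z₀ (j + 1)).im ≤ 2 * l) :
      ε / (2 * l) ≤ (w j).im / (riccatiOrbit w z₀ (j + 1)).im :=
    div_le_div₀ (hε.le.trans (hw j).1) (hw j).1 (hb _) hj
  have hnonneg (j : ℕ) : 0 ≤ (w j).im / (riccatiOrbit w z₀ (j + 1)).im :=
    div_nonneg (hε.le.trans (hw j).1) (hb _).le
  rcases le_or_gt (riccatiOrbit w z₀ (k + 1)).im (2 * l) with hsmall | hlarge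
  · linarith [hgain k hsmall, hnonneg (k + 1)]
  · -- a height above `2l` is followed by one below `l + 1/(2l) ≤ 2l`
    have hinv : (riccatiOrbit w z₀ (k + 1)).im⁻¹ ≤ l :=
      calc _ ≤ (2 * l)⁻¹ := inv_anti₀ (by positivity) hlarge.le
        _ ≤ l := by
          rw [inv_le_iff_one_le_mul₀ (by positivity)]
          nlinarith
    have hnext : (riccatiOrbit w z₀ (k + 2)).im ≤ 2 * l := by
      linarith [riccatiOrbit_succ_im_le (hb (k + 1)), (hw (k + 1)).2]
    linarith [hgain (k + 1) hnext, hnonneg k]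

theorem log_im_sub_log_im_add_sum_le_two_mul_log_norm_prod {ε : ℝ} (hε : 0 < ε)
    (hw : ∀ k, ε ≤ (w k).im) (h₀ : ε ≤ z₀.im) (n : ℕ) :
    log z₀.im - log (riccatiOrbit w z₀ n).im
        + ∑ k ∈ Finset.range n, (w k).im / (riccatiOrbit w z₀ (k + 1)).im
      ≤ 2 * log ‖∏ k ∈ Finset.range n, riccatiOrbit w z₀ k‖ := by
  have hb (j : ℕ) : 0 < (riccatiOrbit w z₀ j).im := hε.trans_le (le_riccatiOrbit_im hε.le hw h₀ j)
  have hne (j : ℕ) : riccatiOrbit w z₀ j ≠ 0 := fun h => by simpa [h] using hb j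
  have htel : log z₀.im - log (riccatiOrbit w z₀ n).im = ∑ k ∈ Finset.range n,
      (log (riccatiOrbit w z₀ k).im - log (riccatiOrbit w z₀ (k + 1)).im) :=
    (Finset.sum_range_sub' (fun k => log (riccatiOrbit w z₀ k).im) n).symm
  rw [htel, ← Finset.sum_add_distrib, norm_prod,
    log_prod fun k _ => norm_ne_zero_iff.2 (hne k), Finset.mul_sum]
  exact Finset.sum_le_sum fun k _ =>
    log_im_sub_log_im_add_div_le_two_mul_log_norm (hb k) (hε.trans_le (hw k))

end riccatiOrbit

section Cocycle

variable (v : ℝ → ℂ) (α : ℝ)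

theorem det_scocProd (x : ℝ) (n : ℕ) : (ScocProd v α x n).det = 1 := by
  induction n with
  | zero => simp [ScocProd]
  | succ n ih =>
    rw [ScocProd, Matrix.det_mul, ih, mul_one, Scoc, Matrix.det_fin_two_of]
    ring

theorem norm_scocProd_pos (x : ℝ) (n : ℕ) : 0 < ‖ScocProd v α x n‖ :=
  norm_pos_iff.2 fun h => by simpa [h] using det_scocProd v α x n

theorem scocProd_add (x : ℝ) (m n : ℕ) :
    ScocProd v α x (m + n) = ScocProd v α (x + m * α) n * ScocProd v α x m := by
  induction n with
  | zero => simp [ScocProd]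
  | succ n ih =>
    rw [← add_assoc, ScocProd, ih, ScocProd, ← mul_assoc]
    push_cast
    ring_nf

theorem scocProd_add_one (hv : ∀ x, v (x + 1) = v x) (x : ℝ) (n : ℕ) :
    ScocProd v α (x + 1) n = ScocProd v α x n := by
  induction n with
  | zero => rfl
  | succ n ih =>
    rw [ScocProd, ScocProd, ih, Scoc, Scoc, add_right_comm, hv]

theorem continuous_log_norm_scocProd (hv : Continuous v) (n : ℕ) :
    Continuous fun x => log ‖ScocProd v α x n‖ := by
  have hA : Continuous fun x => ScocProd v α x n := by
    induction n with
    | zero => exact continuous_const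
    | succ n ih =>
      refine Continuous.matrix_mul ?_ ih
      simp only [Scoc]
      fun_prop
  exact hA.norm.log fun x => (norm_scocProd_pos v α x n).ne'

theorem log_norm_scocProd_add_le (m n : ℕ) (x : ℝ) :
    log ‖ScocProd v α x (m + n)‖ ≤
      log ‖ScocProd v α (x + m * α) n‖ + log ‖ScocProd v α x m‖ + log 2 := by
  have h := Matrix.norm_mul_le_card_mul (ScocProd v α (x + m * α) n) (ScocProd v α x m)
  rw [← scocProd_add, Fintype.card_fin, Nat.cast_ofNat] at h
  have hn := norm_scocProd_pos v α (x + m * α) n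
  have hm := norm_scocProd_pos v α x m
  calc log ‖ScocProd v α x (m + n)‖
      ≤ log (2 * (‖ScocProd v α (x + m * α) n‖ * ‖ScocProd v α x m‖)) :=
        log_le_log (norm_scocProd_pos v α x _) h
    _ = _ := by
        rw [log_mul two_ne_zero (mul_pos hn hm).ne', log_mul hn.ne' hm.ne']
        ring

theorem scoc_mulVec (y : ℝ) {z : ℂ} (hz : z ≠ 0) :
    Scoc v y *ᵥ ![z, 1] = z • ![v y - z⁻¹, 1] := by
  ext i
  fin_cases i
  · simp [Scoc, mul_sub, mul_inv_cancel₀ hz]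
    ring
  · simp [Scoc]

theorem scocProd_mulVec (x : ℝ) (z₀ : ℂ)
    (hz : ∀ k, riccatiOrbit (fun k : ℕ => v (x + k * α)) z₀ k ≠ 0) (n : ℕ) :
    ScocProd v α x n *ᵥ ![z₀, 1] =
      (∏ k ∈ Finset.range n, riccatiOrbit (fun k : ℕ => v (x + k * α)) z₀ k) •
        ![riccatiOrbit (fun k : ℕ => v (x + k * α)) z₀ n, 1] := by
  induction n with
  | zero => simp [ScocProd, riccatiOrbit]
  | succ n ih =>
    rw [ScocProd, ← Matrix.mulVec_mulVec, ih, Matrix.mulVec_smul, scoc_mulVec v _ (hz n),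
      Finset.prod_range_succ, smul_smul]
    rfl

theorem norm_prod_riccatiOrbit_le (x : ℝ) (z₀ : ℂ)
    (hz : ∀ k, riccatiOrbit (fun k : ℕ => v (x + k * α)) z₀ k ≠ 0) (n : ℕ) :
    ‖∏ k ∈ Finset.range n, riccatiOrbit (fun k : ℕ => v (x + k * α)) z₀ k‖ ≤
      ‖ScocProd v α x n‖ * (‖z₀‖ + 1) := by
  have h := Matrix.norm_mulVec_apply_le (ScocProd v α x n) ![z₀, 1] 1
  rw [scocProd_mulVec v α x z₀ hz n] at h
  simpa [Fin.sum_univ_two] using h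

end Cocycle

theorem exists_sub_le_log_norm_scocProd {v : ℝ → ℂ} (α : ℝ) {ε l : ℝ} (hl : 1 ≤ l) (hε : 0 < ε)
    (hv : ∀ y, ε ≤ (v y).im ∧ (v y).im ≤ l) :
    ∃ b, ∀ x (n : ℕ), n * (ε / (8 * l)) - b ≤ log ‖ScocProd v α x n‖ := by
  refine ⟨ε / (8 * l) + (log (l + ε⁻¹) - log ε) / 2 + log (ε + 1), fun x n => ?_⟩
  set w : ℕ → ℂ := fun k => v (x + k * α)
  set z := riccatiOrbit w (ε * Complex.I)
  have hw (k : ℕ) : ε ≤ (w k).im ∧ (w k).im ≤ l := hv _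
  have hz₀ : (ε * Complex.I).im = ε := by simp
  have hεz (k : ℕ) : ε ≤ (z k).im := le_riccatiOrbit_im hε.le (fun k => (hw k).1) hz₀.ge k
  have hne (k : ℕ) : z k ≠ 0 := fun h => by simpa [h] using hε.trans_le (hεz k)
  have hzn : (z n).im ≤ l + ε⁻¹ := by
    cases n with
    | zero =>
      simpa [z, riccatiOrbit] using
        (hv 0).1.trans ((hv 0).2.trans (le_add_of_nonneg_right (inv_pos.2 hε).le))
    | succ n =>
      linarith [riccatiOrbit_succ_im_le (hε.trans_le (hεz n)), (hw n).2, inv_anti₀ hε (hεz n)]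
  have hgain := sub_one_mul_le_two_mul_sum_range (by positivity)
    (fun k => div_nonneg (hε.le.trans (hw k).1) (hε.le.trans (hεz (k + 1))))
    (le_im_div_riccatiOrbit_im_add_next hl hε hw hz₀.ge) n
  have htel := log_im_sub_log_im_add_sum_le_two_mul_log_norm_prod hε (fun k => (hw k).1) hz₀.ge n
  have hprod : log ‖∏ k ∈ Finset.range n, z k‖ ≤ log ‖ScocProd v α x n‖ + log (ε + 1) := by
    rw [← log_mul (norm_scocProd_pos v α x n).ne' (by positivity)]
    refine log_le_log (norm_pos_iff.2 (Finset.prod_ne_zero_iff.2 fun k _ => hne k)) ?_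
    simpa [abs_of_pos hε] using norm_prod_riccatiOrbit_le v α x _ hne n
  have hlogz : log (z n).im ≤ log (l + ε⁻¹) := log_le_log (hε.trans_le (hεz n)) hzn
  rw [hz₀] at htel
  have hslope : ((n : ℝ) - 1) * (ε / (2 * l)) = 4 * ((n : ℝ) * (ε / (8 * l)) - ε / (8 * l)) := by
    field_simp
    ring
  linarith

/-- Let `α ∈ ℝ∖ℚ` and `ṽ ∈ C⁰(𝕋, ℂ)`. Assume there are constants
`l ≥ 1` and `0 < ε ≤ l` with `|Re ṽ(x)| ≤ l` and `ε ≤ Im ṽ(x) ≤ l` for every `x ∈ 𝕋`.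
Then the Lyapunov exponent satisfies `L(α, S^ṽ) ≥ C(l)·ε`, where `C(l) > 0` is a constant
depending only on `l`. -/
theorem lyapunov_lower_bound_of_complex_potential (l : ℝ) (hl : 1 ≤ l) :
    ∃ C : ℝ, 0 < C ∧
      ∀ ε : ℝ, 0 < ε → ε ≤ l →
        ∀ α : ℝ, Irrational α →
          ∀ v : ℝ → ℂ, Continuous v → (∀ x : ℝ, v (x + 1) = v x) →
            (∀ x : ℝ, |(v x).re| ≤ l ∧ ε ≤ (v x).im ∧ (v x).im ≤ l) →
            ∃ L : ℝ, IsLyapunovSchrodinger v α L ∧ C * ε ≤ L := by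
  refine ⟨1 / (8 * l), by positivity, fun ε hε _ α _ v hv hper hbound => ?_⟩
  obtain ⟨b, hb⟩ := exists_sub_le_log_norm_scocProd α hl hε fun y => (hbound y).2
  have hsub := setIntegral_Ioc_add_le_of_le_comp_add (continuous_log_norm_scocProd v α hv)
    (fun n x => by simp only [scocProd_add_one v α hper]) (log_norm_scocProd_add_le v α)
  have hlow (n : ℕ) :
      n * (ε / (8 * l)) - b ≤ ∫ x in Set.Ioc (0 : ℝ) 1, log ‖ScocProd v α x n‖ := by
    simpa using setIntegral_ge_of_const_le_real (s := Set.Ioc 0 1) (μ := volume)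
      measurableSet_Ioc measure_Ioc_lt_top.ne (fun x _ => hb x n)
      (continuous_log_norm_scocProd v α hv n).integrableOn_Ioc
  obtain ⟨L, hL, hεL⟩ := exists_tendsto_div_ge_of_add_le_add_add hsub hlow
  refine ⟨L, ?_, by rwa [one_div_mul_eq_div]⟩
  simpa only [IsLyapunovSchrodinger, one_div_mul_eq_div] using hL
end
end
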